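/- arXiv:2012.11752 — 2 statements merged into one kernel-verified Lean document; each statement's English description precedes it below -/
import Mathlib

section
/- Let m = 3, r ∈ ℕ, and λ ∈ ℂ. Define m(r,k,λ) ∈ ℂ recursively by m(r,0,λ) = 2N − 3r − λ and m(r,k,λ) = m(r,k−1,λ) + (2N − 3r − 4k) − λ for k ≥ 1. If f is a vertex function on C_3^N supported in Σ_r with A_- f = 0 and A_0 f = λ • f, then for every k ∈ ℕ, A_-(A_+^{k+1} f) = m(r,k,λ) • (A_+^k f), where A_+^k denotes the k-fold composition of A_+. -/
open Finset

/-- The standard generator `e_k` of `(ZMod m)^N`: equal to `1` in coordinate `k`,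
`0` elsewhere. -/
def eV (N m : ℕ) (k : Fin N) : Fin N → ZMod m :=
  fun j => if j = k then 1 else 0

/-- Adjacency in the Cayley graph `C_m^N`: `v ∼ w` iff `w = v + e_k` or `w = v - e_k`
for some coordinate `k`. -/
def adj (N m : ℕ) (v w : Fin N → ZMod m) : Prop :=
  ∃ k : Fin N, w = v + eV N m k ∨ w = v - eV N m k

/-- The `k`-th level of a vertex: `d_k(v) = min((v k).val, m - (v k).val)`. -/
def lev (N m : ℕ) (v : Fin N → ZMod m) (k : Fin N) : ℕ :=
  min ((v k).val) (m - (v k).val)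

/-- Path distance of a vertex to the origin: `d(v) = Σ_k d_k(v)`. -/
def distO (N m : ℕ) (v : Fin N → ZMod m) : ℕ :=
  ∑ k : Fin N, lev N m v k

open Classical in
/-- Adjacency operator: `(A f)(v) = Σ_{w ∼ v} f(w)`. -/
noncomputable def Aop (N m : ℕ) [NeZero m] (f : (Fin N → ZMod m) → ℂ) :
    (Fin N → ZMod m) → ℂ :=
  fun v => ∑ w : Fin N → ZMod m, if adj N m v w then f w else 0

open Classical in
/-- Outer adjacency: `(A₊ f)(v) = Σ_{w ∼ v, d(w) < d(v)} f(w)`. -/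
noncomputable def Aplus (N m : ℕ) [NeZero m] (f : (Fin N → ZMod m) → ℂ) :
    (Fin N → ZMod m) → ℂ :=
  fun v => ∑ w : Fin N → ZMod m,
    if adj N m v w ∧ distO N m w < distO N m v then f w else 0

open Classical in
/-- Inner adjacency: `(A₋ f)(v) = Σ_{w ∼ v, d(w) > d(v)} f(w)`. -/
noncomputable def Aminus (N m : ℕ) [NeZero m] (f : (Fin N → ZMod m) → ℂ) :
    (Fin N → ZMod m) → ℂ :=
  fun v => ∑ w : Fin N → ZMod m,
    if adj N m v w ∧ distO N m v < distO N m w then f w else 0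

open Classical in
/-- Neutral adjacency: `(A₀ f)(v) = Σ_{w ∼ v, d(w) = d(v)} f(w)`. -/
noncomputable def Azero (N m : ℕ) [NeZero m] (f : (Fin N → ZMod m) → ℂ) :
    (Fin N → ZMod m) → ℂ :=
  fun v => ∑ w : Fin N → ZMod m,
    if adj N m v w ∧ distO N m w = distO N m v then f w else 0

/-- The `k`-reflection `ṽ_k` of a vertex: negate the `k`-th coordinate. -/
def reflV (N m : ℕ) (k : Fin N) (v : Fin N → ZMod m) : Fin N → ZMod m :=
  Function.update v k (-(v k))

/-- Level-one reflection sum: `(R₁ f)(v) = Σ_{k : d_k(v) = 1} f(ṽ_k)`. -/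
noncomputable def R1 (N m : ℕ) (f : (Fin N → ZMod m) → ℂ) :
    (Fin N → ZMod m) → ℂ :=
  fun v => ∑ k ∈ Finset.univ.filter (fun k => lev N m v k = 1), f (reflV N m k v)

/-- Number of coordinates of `v` at level `ℓ`. -/
def cardLev (N m : ℕ) (v : Fin N → ZMod m) (ℓ : ℕ) : ℕ :=
  (Finset.univ.filter (fun k => lev N m v k = ℓ)).card

/-- The multiplier `m(r,k,λ)`: `m(r,0,λ) = 2N - 3r - λ` and
`m(r,k,λ) = m(r,k-1,λ) + (2N - 3r - 4k) - λ`. -/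
def mco (N r : ℕ) (lam : ℂ) : ℕ → ℂ
  | 0 => 2 * (N : ℂ) - 3 * (r : ℂ) - lam
  | k + 1 => mco N r lam k + (2 * (N : ℂ) - 3 * (r : ℂ) - 4 * ((k : ℂ) + 1)) - lam

/-!
Each of `A₊`, `A₋`, `A₀` is a sum over the coordinates `k` of one fixed `3 × 3` kernel acting on
the `k`-th coordinate only. Kernels acting on different coordinates commute, so the commutator of
two such sums is the sum of the one-coordinate commutators, and a computation with `3 × 3`
matrices gives `[A₋, A₊] = 2N - 3d - A₀` (with `d` multiplication by the distance to the origin)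
and `[A₀, A₊] = A₊`. Hence `A₊^k f` lies in `Σ_{r+k}` and is an `A₀`-eigenfunction with eigenvalue
`λ + k`, and `A₋ A₊^{k+1} f = A₊ A₋ A₊^k f + (2N - 3(r + k) - λ - k) A₊^k f`; induction on `k`
gives the recursion defining `m(r, k, λ)`.
-/

open Function

theorem sum_mul_sum_sub_sum_mul_sum_of_commute {ι A : Type*} [Ring A] (s : Finset ι)
    (a b : ι → A) (h : ∀ i ∈ s, ∀ j ∈ s, i ≠ j → Commute (a i) (b j)) :
    (∑ i ∈ s, a i) * (∑ j ∈ s, b j) - (∑ j ∈ s, b j) * (∑ i ∈ s, a i)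
      = ∑ i ∈ s, (a i * b i - b i * a i) := by
  rw [Finset.sum_mul_sum, Finset.sum_mul_sum, Finset.sum_comm (s := s) (t := s),
    ← Finset.sum_sub_distrib]
  refine Finset.sum_congr rfl fun i hi => ?_
  rw [← Finset.sum_sub_distrib]
  refine Finset.sum_eq_single i (fun j hj hji => ?_) (by simp [hi])
  rw [(h j hj i hi hji).eq, sub_self]

section CoordOp

variable {ι α R : Type*} [DecidableEq ι] [Fintype α] [DecidableEq α] [CommRing R]

/-- The matrix `c` acting on the `k`-th factor of `(ι → α) → R ≅ ⨂ₖ (α → R)`. -/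
noncomputable def coordOp (k : ι) : Matrix α α R →ₐ[R] Module.End R ((ι → α) → R) :=
  AlgHom.ofLinearMap
    { toFun := fun c =>
        { toFun := fun f v => ∑ x, c (v k) x * f (update v k x)
          map_add' := fun f g => by ext v; simp [mul_add, Finset.sum_add_distrib]
          map_smul' := fun a f => by ext v; simp [mul_left_comm, Finset.mul_sum] }
      map_add' := fun c d => by ext f v; simp [add_mul, Finset.sum_add_distrib]
      map_smul' := fun a c => by ext f v; simp [mul_assoc, Finset.mul_sum] }
    (by ext f v; simp [Matrix.one_apply])
    (fun c d => by
      ext f v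
      simp only [LinearMap.coe_mk, AddHom.coe_mk, Module.End.mul_apply, Matrix.mul_apply,
        update_self, update_idem, Finset.sum_mul, Finset.mul_sum]
      rw [Finset.sum_comm]
      exact Finset.sum_congr rfl fun _ _ => Finset.sum_congr rfl fun _ _ => mul_assoc _ _ _)

theorem coordOp_apply (k : ι) (c : Matrix α α R) (f : (ι → α) → R) (v : ι → α) :
    coordOp k c f v = ∑ x, c (v k) x * f (update v k x) := rfl

theorem coordOp_diagonal_apply (k : ι) (d : α → R) (f : (ι → α) → R) (v : ι → α) :
    coordOp k (Matrix.diagonal d) f v = d (v k) * f v := by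
  simp [coordOp_apply, Matrix.diagonal_apply]

theorem commute_coordOp {k j : ι} (hkj : k ≠ j) (c d : Matrix α α R) :
    Commute (coordOp k c) (coordOp j d) := by
  ext f v
  simp only [Module.End.mul_apply, coordOp_apply, update_of_ne hkj, update_of_ne hkj.symm,
    Finset.mul_sum]
  rw [Finset.sum_comm]
  refine Finset.sum_congr rfl fun y _ => Finset.sum_congr rfl fun x _ => ?_
  rw [update_comm hkj]
  ring

variable [Fintype ι]

noncomputable def coordSum : Matrix α α R →ₗ[R] Module.End R ((ι → α) → R) :=
  ∑ k, (coordOp k).toLinearMap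

theorem coordSum_apply (c : Matrix α α R) :
    (coordSum c : Module.End R ((ι → α) → R)) = ∑ k, coordOp k c := by
  simp [coordSum]

theorem coordSum_one :
    (coordSum 1 : Module.End R ((ι → α) → R)) = (Fintype.card ι : R) • 1 := by
  simp [coordSum_apply, ← Nat.cast_smul_eq_nsmul R]

theorem coordSum_diagonal_apply (d : α → R) (f : (ι → α) → R) (v : ι → α) :
    coordSum (ι := ι) (Matrix.diagonal d) f v = (∑ k, d (v k)) * f v := by
  simp [coordSum_apply, LinearMap.sum_apply, coordOp_diagonal_apply, Finset.sum_mul]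

theorem coordSum_mul_sub_mul_coordSum (c d : Matrix α α R) :
    (coordSum c * coordSum d - coordSum d * coordSum c : Module.End R ((ι → α) → R))
      = coordSum (c * d - d * c) := by
  rw [coordSum_apply, coordSum_apply, coordSum_apply,
    sum_mul_sum_sub_sum_mul_sum_of_commute _ _ _ fun k _ j _ hkj => commute_coordOp hkj c d]
  simp only [map_sub, map_mul]

end CoordOp

def zlev {m : ℕ} (a : ZMod m) : ℕ := min a.val (m - a.val)

theorem sum_zmod_three {M : Type*} [AddCommMonoid M] (g : ZMod 3 → M) :
    ∑ x, g x = g 0 + g 1 + g 2 :=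
  Fin.sum_univ_three g

theorem zmod_three_cases (a : ZMod 3) : a = 0 ∨ a = 1 ∨ a = 2 := by
  revert a; decide

theorem zlev_zero : zlev (0 : ZMod 3) = 0 := rfl
theorem zlev_one : zlev (1 : ZMod 3) = 1 := rfl
theorem zlev_two : zlev (2 : ZMod 3) = 1 := rfl

theorem zlev_le_one (a : ZMod 3) : zlev a ≤ 1 := by
  revert a; decide

theorem distO_update_add {N m : ℕ} (v : Fin N → ZMod m) (k : Fin N) (x : ZMod m) :
    distO N m (update v k x) + zlev (v k) = distO N m v + zlev x := by
  have hrest : ∑ j ∈ Finset.univ.erase k, lev N m (update v k x) j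
      = ∑ j ∈ Finset.univ.erase k, lev N m v j :=
    Finset.sum_congr rfl fun j hj => by simp only [lev, update_of_ne (Finset.ne_of_mem_erase hj)]
  unfold distO
  rw [← Finset.add_sum_erase _ _ (Finset.mem_univ k),
    ← Finset.add_sum_erase _ _ (Finset.mem_univ k), hrest]
  simp only [lev, update_self, zlev]
  ring

theorem add_eV {N m : ℕ} (v : Fin N → ZMod m) (k : Fin N) :
    v + eV N m k = update v k (v k + 1) := by
  ext j
  by_cases h : j = k
  · subst h; simp [eV]
  · simp [eV, h]

theorem sub_eV {N m : ℕ} (v : Fin N → ZMod m) (k : Fin N) :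
    v - eV N m k = update v k (v k - 1) := by
  ext j
  by_cases h : j = k
  · subst h; simp [eV]
  · simp [eV, h]

theorem adj_three_iff {N : ℕ} {v w : Fin N → ZMod 3} :
    adj N 3 v w ↔ ∃ k x, x ≠ v k ∧ update v k x = w := by
  have hne : ∀ a x : ZMod 3, x ≠ a ↔ x = a + 1 ∨ x = a - 1 := by decide
  simp only [adj, add_eV, sub_eV]
  constructor
  · rintro ⟨k, h | h⟩ <;> exact ⟨k, _, (hne _ _).2 (by simp), h.symm⟩
  · rintro ⟨k, x, hx, rfl⟩
    rcases (hne _ _).1 hx with h | h <;> exact ⟨k, by simp [h]⟩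

theorem update_injOn {ι α : Type*} [DecidableEq ι] (v : ι → α) :
    Set.InjOn (fun kx : ι × α => update v kx.1 kx.2) {kx | kx.2 ≠ v kx.1} := by
  rintro ⟨k, x⟩ hx ⟨j, y⟩ - h
  simp only [Set.mem_ofPred_eq] at hx
  obtain rfl : k = j := by
    by_contra hkj
    exact hx (by simpa [update_of_ne hkj] using congrFun h k)
  simpa using congrFun h k

open Classical in
theorem sum_adj_three {N : ℕ} {M : Type*} [AddCommMonoid M] (p : (Fin N → ZMod 3) → Prop)
    [DecidablePred p] (g : (Fin N → ZMod 3) → M) (v : Fin N → ZMod 3) :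
    (∑ w, if adj N 3 v w ∧ p w then g w else 0)
      = ∑ k, ∑ x, if x ≠ v k ∧ p (update v k x) then g (update v k x) else 0 := by
  have himage : Finset.univ.filter (adj N 3 v)
      = (Finset.univ.filter fun kx : Fin N × ZMod 3 => kx.2 ≠ v kx.1).image
          fun kx => update v kx.1 kx.2 := by
    ext w
    simp [adj_three_iff]
  calc (∑ w, if adj N 3 v w ∧ p w then g w else 0)
      = ∑ w ∈ Finset.univ.filter (adj N 3 v), if p w then g w else 0 := by
        rw [Finset.sum_filter]; simp only [ite_and]
    _ = ∑ kx ∈ Finset.univ.filter (fun kx : Fin N × ZMod 3 => kx.2 ≠ v kx.1),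
          if p (update v kx.1 kx.2) then g (update v kx.1 kx.2) else 0 := by
        rw [himage, Finset.sum_image fun kx hkx ly hly =>
          update_injOn v (by simpa using hkx) (by simpa using hly)]
    _ = _ := by
        rw [Finset.sum_filter, Fintype.sum_prod_type]; simp only [ite_and]

noncomputable def levelKer (p : ℕ → ℕ → Prop) [DecidableRel p] : Matrix (ZMod 3) (ZMod 3) ℂ :=
  Matrix.of fun a x => if x ≠ a ∧ p (zlev x) (zlev a) then 1 else 0

open Classical in
theorem adjSum_eq_coordSum_levelKer {N : ℕ} (p : ℕ → ℕ → Prop) [DecidableRel p]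
    (hp : ∀ a b c d, a + d = b + c → (p a b ↔ p c d)) (g : (Fin N → ZMod 3) → ℂ)
    (v : Fin N → ZMod 3) :
    (∑ w, if adj N 3 v w ∧ p (distO N 3 w) (distO N 3 v) then g w else 0)
      = coordSum (levelKer p) g v := by
  rw [sum_adj_three, coordSum_apply, LinearMap.sum_apply, Finset.sum_apply]
  simp only [coordOp_apply]
  refine Finset.sum_congr rfl fun k _ => Finset.sum_congr rfl fun x _ => ?_
  simp [levelKer, hp _ _ _ _ (distO_update_add v k x)]

theorem aplus_eq {N : ℕ} : Aplus N 3 = coordSum (ι := Fin N) (levelKer (· < ·)) :=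
  funext fun g => funext fun v =>
    adjSum_eq_coordSum_levelKer (· < ·) (fun _ _ _ _ _ => by omega) g v

theorem aminus_eq {N : ℕ} : Aminus N 3 = coordSum (ι := Fin N) (levelKer (· > ·)) :=
  funext fun g => funext fun v =>
    adjSum_eq_coordSum_levelKer (· > ·) (fun _ _ _ _ _ => by omega) g v

theorem azero_eq {N : ℕ} : Azero N 3 = coordSum (ι := Fin N) (levelKer (· = ·)) :=
  funext fun g => funext fun v =>
    adjSum_eq_coordSum_levelKer (· = ·) (fun _ _ _ _ _ => by omega) g v

theorem levelKer_commutator_gt_lt :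
    levelKer (· > ·) * levelKer (· < ·) - levelKer (· < ·) * levelKer (· > ·)
      = (2 : ℂ) • 1 - (3 : ℂ) • Matrix.diagonal (fun a => (zlev a : ℂ)) - levelKer (· = ·) := by
  ext a x
  simp only [Matrix.sub_apply, Matrix.mul_apply, sum_zmod_three, Matrix.smul_apply,
    Matrix.one_apply, Matrix.diagonal_apply, levelKer, Matrix.of_apply]
  rcases zmod_three_cases a with rfl | rfl | rfl <;>
    rcases zmod_three_cases x with rfl | rfl | rfl <;>
    simp +decide [zlev_zero, zlev_one, zlev_two] <;> norm_num

theorem levelKer_commutator_eq_lt :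
    levelKer (· = ·) * levelKer (· < ·) - levelKer (· < ·) * levelKer (· = ·)
      = levelKer (· < ·) := by
  ext a x
  simp only [Matrix.sub_apply, Matrix.mul_apply, sum_zmod_three, levelKer, Matrix.of_apply]
  rcases zmod_three_cases a with rfl | rfl | rfl <;>
    rcases zmod_three_cases x with rfl | rfl | rfl <;>
    simp +decide

theorem aminus_aplus_apply {N : ℕ} (g : (Fin N → ZMod 3) → ℂ) (v : Fin N → ZMod 3) :
    Aminus N 3 (Aplus N 3 g) v
      = Aplus N 3 (Aminus N 3 g) v + (2 * N - 3 * distO N 3 v) * g v - Azero N 3 g v := by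
  have h := congrFun (LinearMap.congr_fun
    (coordSum_mul_sub_mul_coordSum (ι := Fin N) (levelKer (· > ·)) (levelKer (· < ·))) g) v
  rw [levelKer_commutator_gt_lt, map_sub, map_sub, map_smul, map_smul, coordSum_one] at h
  simp only [LinearMap.sub_apply, Module.End.mul_apply, LinearMap.smul_apply, Pi.sub_apply,
    Pi.smul_apply, coordSum_diagonal_apply, Module.End.one_apply, smul_eq_mul,
    Fintype.card_fin] at h
  rw [aminus_eq, aplus_eq, azero_eq]
  have hd : (distO N 3 v : ℂ) = ∑ k, (zlev (v k) : ℂ) := by simp [distO, lev, zlev]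
  rw [hd]
  linear_combination h

theorem azero_aplus {N : ℕ} (g : (Fin N → ZMod 3) → ℂ) :
    Azero N 3 (Aplus N 3 g) = Aplus N 3 (Azero N 3 g) + Aplus N 3 g := by
  have h := LinearMap.congr_fun
    (coordSum_mul_sub_mul_coordSum (ι := Fin N) (levelKer (· = ·)) (levelKer (· < ·))) g
  rw [levelKer_commutator_eq_lt] at h
  rw [azero_eq, aplus_eq]
  exact sub_eq_iff_eq_add'.mp h

theorem aplus_smul {N : ℕ} (c : ℂ) (g : (Fin N → ZMod 3) → ℂ) :
    Aplus N 3 (c • g) = c • Aplus N 3 g := by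
  rw [aplus_eq]
  exact map_smul _ c g

theorem aminus_aplus_of_eigen {N s : ℕ} {μ : ℂ} {g : (Fin N → ZMod 3) → ℂ}
    (hg : ∀ v, distO N 3 v ≠ s → g v = 0) (hμ : Azero N 3 g = μ • g) :
    Aminus N 3 (Aplus N 3 g) = Aplus N 3 (Aminus N 3 g) + (2 * N - 3 * s - μ) • g := by
  ext v
  rw [aminus_aplus_apply, hμ]
  by_cases hv : distO N 3 v = s
  · simp only [hv, Pi.add_apply, Pi.smul_apply, smul_eq_mul]
    ring
  · simp [hg v hv]

theorem aplus_apply_eq_zero_of_distO_ne {N s : ℕ} {g : (Fin N → ZMod 3) → ℂ}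
    (hg : ∀ v, distO N 3 v ≠ s → g v = 0) (v : Fin N → ZMod 3) (hv : distO N 3 v ≠ s + 1) :
    Aplus N 3 g v = 0 := by
  refine Finset.sum_eq_zero fun w _ => ?_
  split_ifs with hw
  · obtain ⟨hadj, hlt⟩ := hw
    obtain ⟨k, x, -, rfl⟩ := adj_three_iff.1 hadj
    have hd := distO_update_add v k x
    have hle := zlev_le_one (v k)
    exact hg _ (by omega)
  · rfl

theorem lowering_identity_C3_general (N r : ℕ) (lam : ℂ)
    (f : (Fin N → ZMod 3) → ℂ)
    (hf : ∀ v, distO N 3 v ≠ r → f v = 0)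
    (hker : Aminus N 3 f = 0)
    (heig : Azero N 3 f = lam • f) :
    ∀ k : ℕ, Aminus N 3 ((Aplus N 3)^[k + 1] f)
      = mco N r lam k • (Aplus N 3)^[k] f := by
  have hsupp : ∀ j v, distO N 3 v ≠ r + j → (Aplus N 3)^[j] f v = 0 := by
    intro j
    induction j with
    | zero => exact hf
    | succ j ih =>
      intro v hv
      rw [iterate_succ_apply']
      exact aplus_apply_eq_zero_of_distO_ne ih v (by omega)
  have heigen : ∀ j : ℕ, Azero N 3 ((Aplus N 3)^[j] f) = (lam + j) • (Aplus N 3)^[j] f := by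
    intro j
    induction j with
    | zero => simpa using heig
    | succ j ih =>
      rw [iterate_succ_apply', azero_aplus, ih, aplus_smul]
      push_cast
      module
  have hstep (j : ℕ) := aminus_aplus_of_eigen (hsupp j) (heigen j)
  intro k
  induction k with
  | zero =>
    simpa [mco, hker, aplus_eq] using hstep 0
  | succ k ih =>
    rw [iterate_succ_apply', hstep, ih, aplus_smul, ← iterate_succ_apply' (Aplus N 3) k f]
    simp only [mco]
    push_cast
    module

/-- on `C_3^N`, if `f` is supported in `Σ_r`, `A₋ f = 0` and
`A₀ f = λ • f`, then `A₋ A₊^{k+1} f = m(r,k,λ) • A₊^k f` for every `k`. -/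
theorem lowering_identity_C3 (N r : ℕ) (hN : 1 ≤ N) (lam : ℂ)
    (f : (Fin N → ZMod 3) → ℂ)
    (hf : ∀ v, distO N 3 v ≠ r → f v = 0)
    (hker : Aminus N 3 f = 0)
    (heig : Azero N 3 f = lam • f) :
    ∀ k : ℕ, Aminus N 3 ((Aplus N 3)^[k + 1] f)
      = mco N r lam k • (Aplus N 3)^[k] f :=
  lowering_identity_C3_general N r lam f hf hker heig
end

section
/- Let m = 5. For every coordinate k ∈ Fin N and every vertex function f on C_5^N, the reflection operator commutes with the outer and inner adjacencies: ρ_k (A_+ f) = A_+ (ρ_k f) and ρ_k (A_- f) = A_- (ρ_k f). -/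
/-!
The reflection `ρ_k` is an involutive additive automorphism of `(ZMod m)^N` sending `e_j` to
`±e_j`, hence an automorphism of the graph `C_m^N`; since `-x` and `x` have the same level, it
also preserves the distance to the origin. Reindexing the sums defining `A₊` and `A₋` along
`ρ_k` therefore turns `ρ_k A_± f` into `A_± ρ_k f`.
-/

open Finset

section Reflection

variable {N m : ℕ} (k : Fin N)

theorem reflV_involutive : Function.Involutive (reflV N m k) := by
  intro v
  funext j
  by_cases h : j = k
  · subst h; simp [reflV]
  · simp [reflV, Function.update_of_ne h]

theorem reflV_add (v w : Fin N → ZMod m) :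
    reflV N m k (v + w) = reflV N m k v + reflV N m k w := by
  funext j
  by_cases h : j = k
  · subst h; simp [reflV, add_comm]
  · simp [reflV, Function.update_of_ne h]

theorem reflV_neg (v : Fin N → ZMod m) : reflV N m k (-v) = -reflV N m k v := by
  funext j
  by_cases h : j = k
  · subst h; simp [reflV]
  · simp [reflV, Function.update_of_ne h]

theorem reflV_sub (v w : Fin N → ZMod m) :
    reflV N m k (v - w) = reflV N m k v - reflV N m k w := by
  rw [sub_eq_add_neg, reflV_add, reflV_neg, ← sub_eq_add_neg]

theorem reflV_eV_self : reflV N m k (eV N m k) = -eV N m k := by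
  funext j
  by_cases h : j = k
  · subst h; simp [reflV]
  · simp [reflV, eV, h]

theorem reflV_eV_of_ne {j : Fin N} (hjk : j ≠ k) : reflV N m k (eV N m j) = eV N m j := by
  funext i
  by_cases h : i = k
  · subst h; simp [reflV, eV, Ne.symm hjk]
  · simp [reflV, Function.update_of_ne h]

theorem adj_reflV {v w : Fin N → ZMod m} (h : adj N m v w) :
    adj N m (reflV N m k v) (reflV N m k w) := by
  obtain ⟨j, rfl | rfl⟩ := h <;> refine ⟨j, ?_⟩
  · rw [reflV_add]
    by_cases hjk : j = k
    · subst hjk; right; rw [reflV_eV_self, sub_eq_add_neg]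
    · left; rw [reflV_eV_of_ne k hjk]
  · rw [reflV_sub]
    by_cases hjk : j = k
    · subst hjk; left; rw [reflV_eV_self, sub_neg_eq_add]
    · right; rw [reflV_eV_of_ne k hjk]

theorem adj_reflV_iff (v w : Fin N → ZMod m) :
    adj N m (reflV N m k v) (reflV N m k w) ↔ adj N m v w := by
  refine ⟨fun h => ?_, adj_reflV k⟩
  simpa only [reflV_involutive k _] using adj_reflV k h

theorem lev_reflV [NeZero m] (v : Fin N → ZMod m) (j : Fin N) :
    lev N m (reflV N m k v) j = lev N m v j := by
  by_cases h : j = k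
  · subst h
    simp only [lev, reflV, Function.update_self, ZMod.neg_val]
    split_ifs with h0
    · simp [h0]
    · rw [min_comm, Nat.sub_sub_self (v j).val_lt.le]
  · simp [lev, reflV, Function.update_of_ne h]

theorem distO_reflV [NeZero m] (v : Fin N → ZMod m) :
    distO N m (reflV N m k v) = distO N m v :=
  Finset.sum_congr rfl fun j _ => lev_reflV k v j

theorem Aplus_reflV [NeZero m] (f : (Fin N → ZMod m) → ℂ) (v : Fin N → ZMod m) :
    Aplus N m f (reflV N m k v) = Aplus N m (fun u => f (reflV N m k u)) v := by
  classical
  refine (Fintype.sum_equiv (reflV_involutive k).toPerm _ _ fun w => ?_).symm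
  exact if_congr (by simp only [Function.Involutive.coe_toPerm, adj_reflV_iff, distO_reflV]) rfl rfl

theorem Aminus_reflV [NeZero m] (f : (Fin N → ZMod m) → ℂ) (v : Fin N → ZMod m) :
    Aminus N m f (reflV N m k v) = Aminus N m (fun u => f (reflV N m k u)) v := by
  classical
  refine (Fintype.sum_equiv (reflV_involutive k).toPerm _ _ fun w => ?_).symm
  exact if_congr (by simp only [Function.Involutive.coe_toPerm, adj_reflV_iff, distO_reflV]) rfl rfl

end Reflection

theorem reflection_commutes_C5_general (N : ℕ) (k : Fin N)
    (f : (Fin N → ZMod 5) → ℂ) :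
    (∀ v, Aplus N 5 f (reflV N 5 k v) = Aplus N 5 (fun u => f (reflV N 5 k u)) v) ∧
    (∀ v, Aminus N 5 f (reflV N 5 k v) = Aminus N 5 (fun u => f (reflV N 5 k u)) v) :=
  ⟨Aplus_reflV k f, Aminus_reflV k f⟩

/-- on `C_5^N`, coordinate reflections commute with the outer and
inner adjacency operators: `ρ_k A₊ f = A₊ ρ_k f` and `ρ_k A₋ f = A₋ ρ_k f`. -/
theorem reflection_commutes_C5 (N : ℕ) (hN : 1 ≤ N) (k : Fin N)
    (f : (Fin N → ZMod 5) → ℂ) :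
    (∀ v, Aplus N 5 f (reflV N 5 k v) = Aplus N 5 (fun u => f (reflV N 5 k u)) v) ∧
    (∀ v, Aminus N 5 f (reflV N 5 k v) = Aminus N 5 (fun u => f (reflV N 5 k u)) v) :=
  reflection_commutes_C5_general N k f
end
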